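/- arXiv:2512.11910 — 3 statements merged into one kernel-verified Lean document; each statement's English description precedes it below -/
import Mathlib

section
/- Let u(x) = x - a/(x - b) with a > 0, b = 0, and let F : ℝ → ℝ be continuous with x ↦ x²·F(x) and F integrable on ℝ. Then the sum over the two intervals (-∞, 0), (0, ∞) of the integrals of x²·F(u(x)) dx equals the integral over ℝ of (x² + a)·F(x) dx. -/
/-!
On `(0, ∞)` the map `u x = x - a / x` is a bijection onto `ℝ` with inverse
`x₊ y = (y + √(y ^ 2 + 4a)) / 2`, and `u` is odd, so substituting `x = x₊ y` turns both integrals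
into integrals over `ℝ` with weights `x₊(±y) ^ 2 * x₊'(±y) = x₊(±y) ^ 3 / √(y ^ 2 + 4a)`.
Since `x₊ y + x₊ (-y) = √(y ^ 2 + 4a)` and `x₊ y * x₊ (-y) = a`, the sum of the cubes is
`√(y ^ 2 + 4a) * (y ^ 2 + a)`, so the two weights add up to `y ^ 2 + a`.
-/

open MeasureTheory Set

theorem integral_range_comp_eq_integral_abs_deriv_mul {g g' u : ℝ → ℝ}
    (hg : ∀ y, HasDerivAt g (g' y) y) (hug : Function.LeftInverse u g) (w F : ℝ → ℝ) :
    ∫ x in range g, w x * F (u x) = ∫ y, |g' y| * (w (g y) * F y) := by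
  have h := integral_image_eq_integral_abs_deriv_smul MeasurableSet.univ
    (fun y _ => (hg y).hasDerivWithinAt) hug.injective.injOn (fun x => w x * F (u x))
  simpa only [image_univ, setIntegral_univ, smul_eq_mul, hug _] using h

theorem MeasureTheory.Integrable.mul_of_abs_le {α : Type*} [MeasurableSpace α] {μ : Measure α}
    {v w F : α → ℝ} (hvF : Integrable (fun x => v x * F x) μ) (hw : AEStronglyMeasurable w μ)
    (hF : AEStronglyMeasurable F μ) (hwv : ∀ x, |w x| ≤ |v x|) :
    Integrable (fun x => w x * F x) μ :=
  hvF.mono (hw.mul hF) <| .of_forall fun x => by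
    simp only [norm_mul, Real.norm_eq_abs]
    exact mul_le_mul_of_nonneg_right (hwv x) (abs_nonneg _)

section

variable {a : ℝ}

/-- The positive root of `x ^ 2 - y * x - a`, i.e. the inverse of `x ↦ x - a / x` on `(0, ∞)`. -/
noncomputable def posRoot (a y : ℝ) : ℝ := (y + √(y ^ 2 + 4 * a)) / 2

noncomputable def posWeight (a y : ℝ) : ℝ := posRoot a y ^ 3 / √(y ^ 2 + 4 * a)

theorem sq_sqrt_disc (ha : 0 ≤ a) (y : ℝ) : √(y ^ 2 + 4 * a) ^ 2 = y ^ 2 + 4 * a :=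
  Real.sq_sqrt (by positivity)

theorem abs_lt_sqrt_disc (ha : 0 < a) (y : ℝ) : |y| < √(y ^ 2 + 4 * a) :=
  Real.lt_sqrt_of_sq_lt (by rw [sq_abs]; linarith)

theorem sqrt_disc_pos (ha : 0 < a) (y : ℝ) : 0 < √(y ^ 2 + 4 * a) :=
  (abs_nonneg y).trans_lt (abs_lt_sqrt_disc ha y)

theorem posRoot_pos (ha : 0 < a) (y : ℝ) : 0 < posRoot a y := by
  have := abs_lt_sqrt_disc ha y
  unfold posRoot
  linarith [neg_abs_le y]

theorem posRoot_add_posRoot_neg (y : ℝ) : posRoot a y + posRoot a (-y) = √(y ^ 2 + 4 * a) := by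
  simp only [posRoot, neg_sq]; ring

theorem posRoot_mul_posRoot_neg (ha : 0 ≤ a) (y : ℝ) : posRoot a y * posRoot a (-y) = a := by
  simp only [posRoot, neg_sq]; linear_combination (1 / 4 : ℝ) * sq_sqrt_disc ha y

theorem posRoot_sub_div (ha : 0 < a) (y : ℝ) : posRoot a y - a / posRoot a y = y := by
  have h : a / posRoot a y = posRoot a (-y) := by
    rw [div_eq_iff (posRoot_pos ha y).ne', mul_comm, posRoot_mul_posRoot_neg ha.le]
  rw [h]; simp only [posRoot, neg_sq]; ring

theorem posRoot_sub_div_of_pos (ha : 0 < a) {x : ℝ} (hx : 0 < x) : posRoot a (x - a / x) = x := by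
  have h : √((x - a / x) ^ 2 + 4 * a) = x + a / x := by
    rw [Real.sqrt_eq_iff_mul_self_eq_of_pos (by positivity)]
    field_simp; ring
  rw [posRoot, h]; ring

theorem range_posRoot (ha : 0 < a) : range (posRoot a) = Ioi 0 :=
  Subset.antisymm (range_subset_iff.2 (posRoot_pos ha))
    fun x hx => ⟨x - a / x, posRoot_sub_div_of_pos ha hx⟩

theorem hasDerivAt_posRoot (ha : 0 < a) (y : ℝ) :
    HasDerivAt (posRoot a) (posRoot a y / √(y ^ 2 + 4 * a)) y := by
  have hs := sqrt_disc_pos ha y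
  have h := ((hasDerivAt_pow 2 y).add_const (4 * a)).sqrt (by positivity)
  refine (((hasDerivAt_id' y).add h).div_const 2).congr_deriv ?_
  rw [posRoot]
  field_simp
  ring

theorem continuous_posWeight (ha : 0 < a) : Continuous (posWeight a) := by
  have hroot : Continuous (posRoot a) :=
    continuous_iff_continuousAt.2 fun y => (hasDerivAt_posRoot ha y).continuousAt
  exact (hroot.pow 3).div (by fun_prop) fun y => (sqrt_disc_pos ha y).ne'

theorem posWeight_nonneg (ha : 0 < a) (y : ℝ) : 0 ≤ posWeight a y :=
  div_nonneg (pow_nonneg (posRoot_pos ha y).le 3) (Real.sqrt_nonneg _)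

theorem posWeight_add_posWeight_neg (ha : 0 < a) (y : ℝ) :
    posWeight a y + posWeight a (-y) = y ^ 2 + a := by
  have hs := sqrt_disc_pos ha y
  have hsum := posRoot_add_posRoot_neg (a := a) y
  have hprod := posRoot_mul_posRoot_neg ha.le y
  simp only [posWeight, neg_sq]
  rw [← add_div, div_eq_iff hs.ne']
  set p := posRoot a y; set q := posRoot a (-y); set s := √(y ^ 2 + 4 * a)
  have : p ^ 3 + q ^ 3 = (p + q) ^ 3 - 3 * (p * q) * (p + q) := by ring
  rw [this, hsum, hprod]
  linear_combination s * sq_sqrt_disc ha.le y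

theorem posWeight_le (ha : 0 < a) (y : ℝ) : posWeight a y ≤ y ^ 2 + a := by
  linarith [posWeight_add_posWeight_neg ha y, posWeight_nonneg ha (-y)]

theorem posWeight_neg_le (ha : 0 < a) (y : ℝ) : posWeight a (-y) ≤ y ^ 2 + a := by
  linarith [posWeight_add_posWeight_neg ha y, posWeight_nonneg ha y]

theorem integral_Ioi_sq_mul_comp_sub_div (ha : 0 < a) (G : ℝ → ℝ) :
    ∫ x in Ioi 0, x ^ 2 * G (x - a / x) = ∫ y, posWeight a y * G y := by
  rw [← range_posRoot ha, integral_range_comp_eq_integral_abs_deriv_mul (hasDerivAt_posRoot ha)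
    (u := fun x => x - a / x) (posRoot_sub_div ha)]
  congr 1 with y
  have hs := sqrt_disc_pos ha y
  rw [abs_of_pos (div_pos (posRoot_pos ha y) hs), posWeight]
  ring

theorem integral_Iio_sq_mul_comp_sub_div (ha : 0 < a) (G : ℝ → ℝ) :
    ∫ x in Iio 0, x ^ 2 * G (x - a / x) = ∫ y, posWeight a (-y) * G y := by
  have hodd : ∀ x : ℝ, -x - a / -x = -(x - a / x) := fun x => by ring
  rw [← integral_Iic_eq_integral_Iio, ← neg_zero, ← integral_comp_neg_Ioi]
  simp only [neg_sq, hodd]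
  rw [integral_Ioi_sq_mul_comp_sub_div ha (fun y => G (-y)), ← integral_neg_eq_self]
  simp only [neg_neg]

end

theorem meromorphic_reduction_weight_sq_general (a : ℝ) (ha : 0 < a)
    (F : ℝ → ℝ)
    (hInt : Integrable F) (hx2Int : Integrable (fun x => x ^ 2 * F x)) :
    (∫ x in Iio (0:ℝ), x ^ 2 * F (x - a / x)) + (∫ x in Ioi (0:ℝ), x ^ 2 * F (x - a / x))
      = ∫ x, (x ^ 2 + a) * F x := by
  have hdom : Integrable fun y => (y ^ 2 + a) * F y := by
    refine (hx2Int.add (hInt.const_mul a)).congr (.of_forall fun y => ?_)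
    simp only [Pi.add_apply]; ring
  have hpos : Integrable fun y => posWeight a y * F y :=
    hdom.mul_of_abs_le (continuous_posWeight ha).aestronglyMeasurable hInt.aestronglyMeasurable
      fun y => abs_le_abs_of_nonneg (posWeight_nonneg ha y) (posWeight_le ha y)
  have hneg : Integrable fun y => posWeight a (-y) * F y :=
    hdom.mul_of_abs_le ((continuous_posWeight ha).comp continuous_neg).aestronglyMeasurable
      hInt.aestronglyMeasurable
      fun y => abs_le_abs_of_nonneg (posWeight_nonneg ha (-y)) (posWeight_neg_le ha y)
  rw [integral_Iio_sq_mul_comp_sub_div ha, integral_Ioi_sq_mul_comp_sub_div ha,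
    ← integral_add hneg hpos]
  congr 1 with y
  rw [← add_mul, add_comm, posWeight_add_posWeight_neg ha]

theorem meromorphic_reduction_weight_sq (a : ℝ) (ha : 0 < a)
    (F : ℝ → ℝ) (hF : Continuous F)
    (hInt : Integrable F) (hx2Int : Integrable (fun x => x ^ 2 * F x)) :
    (∫ x in Iio (0:ℝ), x ^ 2 * F (x - a / x)) + (∫ x in Ioi (0:ℝ), x ^ 2 * F (x - a / x))
      = ∫ x, (x ^ 2 + a) * F x :=
  meromorphic_reduction_weight_sq_general a ha F hInt hx2Int
end

section
/- For 0 < b < a, the integral over (0, ∞) of t²·exp(-(t·(t² - a)/(t² - b))²) dt, interpreted as the sum of the integrals over (0, √b) and (√b, ∞), equals (√π/2)·(a - b + 1/2). -/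
/-!
Write `b = s²` and `a - b = 2c`. Away from `±s` the exponent is
`φ t = glasser s c t = t - c / (t - s) - c / (t + s)`, and
`φ' = 1 + c / (t - s)² + c / (t + s)² > 0`, so `φ` increases from `-∞` to `∞` on each of
`(-∞, -s)`, `(-s, s)`, `(s, ∞)`. Substituting the three inverse branches `t = gₖ x` turns the
sum of the three integrals of `t² e^{-φ(t)²}` into `∫ (∑ gₖ' gₖ²) e^{-x²} dx`. For fixed `x` the
`gₖ x` are the three roots of `t³ - x t² - a t + b x`, so Vieta gives
`∑ gₖ³ = x³ + 3 (a - b) x`, and differentiating, `∑ gₖ' gₖ² = x² + (a - b)` (Glasser's master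
theorem with weight `t²`). The integrand is even, so the integral over `(0, s) ∪ (s, ∞)` is half
of `∫ (x² + a - b) e^{-x²} dx = √π / 2 + (a - b) √π`.
-/

open MeasureTheory Set Real Filter Topology

theorem sum_cubes_of_cubic_roots {K : Type*} [Field K] {p q r x y z : K}
    (hxy : x ≠ y) (hxz : x ≠ z) (hyz : y ≠ z)
    (hx : x ^ 3 + p * x ^ 2 + q * x + r = 0) (hy : y ^ 3 + p * y ^ 2 + q * y + r = 0)
    (hz : z ^ 3 + p * z ^ 2 + q * z + r = 0) :
    x ^ 3 + y ^ 3 + z ^ 3 = -p ^ 3 + 3 * p * q - 3 * r := by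
  -- divided differences of the cubic vanish, which yields Vieta's formulas
  have hxy' : x ^ 2 + x * y + y ^ 2 + p * (x + y) + q = 0 :=
    (mul_eq_zero.mp (by linear_combination hx - hy :
      (x - y) * (x ^ 2 + x * y + y ^ 2 + p * (x + y) + q) = 0)).resolve_left (sub_ne_zero.mpr hxy)
  have hxz' : x ^ 2 + x * z + z ^ 2 + p * (x + z) + q = 0 :=
    (mul_eq_zero.mp (by linear_combination hx - hz :
      (x - z) * (x ^ 2 + x * z + z ^ 2 + p * (x + z) + q) = 0)).resolve_left (sub_ne_zero.mpr hxz)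
  have he₁ : x + y + z = -p :=
    eq_neg_of_add_eq_zero_left ((mul_eq_zero.mp (by linear_combination hxy' - hxz' :
      (y - z) * (x + y + z + p) = 0)).resolve_left (sub_ne_zero.mpr hyz))
  have he₂ : x * y + x * z + y * z = q := by linear_combination -hxy' + (x + y) * he₁
  have he₃ : x * y * z = -r := by
    linear_combination hx - x ^ 2 * he₁ + x * he₂
  linear_combination ((x + y + z) ^ 2 - (x + y + z) * p + p ^ 2 - 3 * (x * y + x * z + y * z)) * he₁
    + 3 * p * he₂ + 3 * he₃

theorem StrictMonoOn.exists_hasDerivAt_inverse {f f' : ℝ → ℝ} {s : Set ℝ} (hs : IsOpen s)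
    (hmono : StrictMonoOn f s) (hsurj : SurjOn f s univ)
    (hf : ∀ x ∈ s, HasDerivAt f (f' x) x) (hf' : ∀ x ∈ s, f' x ≠ 0) :
    ∃ g : ℝ → ℝ, StrictMono g ∧ range g = s ∧ (∀ y, f (g y) = y) ∧
      ∀ y, HasDerivAt g (f' (g y))⁻¹ y := by
  set g := Function.invFunOn f s
  have hmem (y : ℝ) : g y ∈ s := Function.invFunOn_mem (hsurj (mem_univ y))
  have hfg (y : ℝ) : f (g y) = y := Function.invFunOn_eq (hsurj (mem_univ y))
  have hg : StrictMono g := fun y z hyz =>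
    (hmono.lt_iff_lt (hmem y) (hmem z)).mp (by rwa [hfg, hfg])
  have hrange : range g = s := by
    refine (range_subset_iff.mpr hmem).antisymm fun t ht => ⟨f t, ?_⟩
    exact hmono.injOn (hmem _) ht (hfg _)
  refine ⟨g, hg, hrange, hfg, fun y => ?_⟩
  have hcont : ContinuousAt g y :=
    continuousAt_of_monotoneOn_of_image_mem_nhds (hg.monotone.monotoneOn univ) univ_mem
      (by rw [image_univ, hrange]; exact hs.mem_nhds (hmem y))
  exact HasDerivAt.of_local_left_inverse hcont (hf _ (hmem y)) (hf' _ (hmem y))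
    (Eventually.of_forall hfg)

theorem StrictMono.integral_range {g : ℝ → ℝ} (hg : StrictMono g)
    (hd : Differentiable ℝ g) (h : ℝ → ℝ) :
    ∫ t in range g, h t = ∫ y, deriv g y * h (g y) := by
  have := integral_image_eq_integral_abs_deriv_smul MeasurableSet.univ
    (fun y _ => (hd y).hasDerivAt.hasDerivWithinAt) hg.injective.injOn h
  simpa [abs_of_nonneg (hg.monotone.deriv_nonneg)] using this

theorem Function.Even.integral_Ioo_neg_eq_two_mul {f : ℝ → ℝ} (hf : f.Even) (s : ℝ) :
    ∫ x in Ioo (-s) s, f x = 2 * ∫ x in Ioo 0 s, f x := by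
  have hfabs (x : ℝ) : (Iio s).indicator f |x| = (Ioo (-s) s).indicator f x := by
    have : f |x| = f x := by rcases abs_choice x with h | h <;> simp [h, hf x]
    simp only [indicator, mem_Iio, mem_Ioo, ← abs_lt, this]
  rw [← integral_indicator measurableSet_Ioo, ← funext hfabs, integral_comp_abs,
    setIntegral_indicator measurableSet_Iio, Ioi_inter_Iio]

theorem Function.Even.integral_Iio_neg_eq_integral_Ioi {f : ℝ → ℝ} (hf : f.Even) (s : ℝ) :
    ∫ x in Iio (-s), f x = ∫ x in Ioi s, f x := by
  rw [← integral_Iic_eq_integral_Iio, ← integral_comp_neg_Ioi]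
  simp only [hf _]

theorem integral_sq_mul_exp_neg_sq : ∫ x : ℝ, x ^ 2 * exp (-x ^ 2) = √π / 2 := by
  have hΓ : Gamma ((2 + 1) / 2) = √π / 2 := by
    rw [show ((2 : ℝ) + 1) / 2 = 1 / 2 + 1 by norm_num, Gamma_add_one (by norm_num),
      Gamma_one_half_eq]
    ring
  have h := integral_rpow_mul_exp_neg_rpow (p := 2) (q := 2) (by norm_num) (by norm_num)
  simp only [rpow_two, hΓ] at h
  have := integral_comp_abs (f := fun x => x ^ 2 * exp (-x ^ 2))
  simp only [sq_abs] at this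
  rw [this, h]
  ring

theorem integral_add_add_of_nonneg {α : Type*} [MeasurableSpace α] {μ : Measure α}
    {f₁ f₂ f₃ F : α → ℝ} (hF : Integrable F μ) (hsum : ∀ x, f₁ x + f₂ x + f₃ x = F x)
    (h₁ : ∀ x, 0 ≤ f₁ x) (h₂ : ∀ x, 0 ≤ f₂ x) (h₃ : ∀ x, 0 ≤ f₃ x)
    (hm₁ : AEStronglyMeasurable f₁ μ) (hm₂ : AEStronglyMeasurable f₂ μ)
    (hm₃ : AEStronglyMeasurable f₃ μ) :
    (∫ x, f₁ x ∂μ) + (∫ x, f₂ x ∂μ) + (∫ x, f₃ x ∂μ) = ∫ x, F x ∂μ := by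
  have hint {f : α → ℝ} (hm : AEStronglyMeasurable f μ) (hle : ∀ x, f x ≤ F x)
      (hf : ∀ x, 0 ≤ f x) : Integrable f μ :=
    hF.mono' hm (ae_of_all _ fun x => by rw [Real.norm_of_nonneg (hf x)]; exact hle x)
  have hi₁ := hint hm₁ (fun x => by linarith [hsum x, h₂ x, h₃ x]) h₁
  have hi₂ := hint hm₂ (fun x => by linarith [hsum x, h₁ x, h₃ x]) h₂
  have hi₃ := hint hm₃ (fun x => by linarith [hsum x, h₁ x, h₂ x]) h₃
  rw [← integral_add hi₁ hi₂, ← integral_add (hi₁.fun_add hi₂) hi₃]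
  exact integral_congr_ae (ae_of_all _ hsum)

theorem integrable_sq_mul_exp_neg_sq : Integrable fun x : ℝ => x ^ 2 * exp (-x ^ 2) := by
  simpa [rpow_two] using integrable_rpow_mul_exp_neg_mul_sq (b := 1) one_pos (s := 2) (by norm_num)

theorem integrable_exp_neg_sq : Integrable fun x : ℝ => exp (-x ^ 2) := by
  simpa using integrable_exp_neg_mul_sq (b := 1) one_pos

theorem integral_exp_neg_sq : ∫ x : ℝ, exp (-x ^ 2) = √π := by
  simpa using integral_gaussian 1

theorem integrable_sq_add_mul_exp_neg_sq (k : ℝ) :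
    Integrable fun x : ℝ => (x ^ 2 + k) * exp (-x ^ 2) := by
  simpa only [add_mul] using
    integrable_sq_mul_exp_neg_sq.fun_add (integrable_exp_neg_sq.const_mul k)

theorem integral_sq_add_mul_exp_neg_sq (k : ℝ) :
    ∫ x : ℝ, (x ^ 2 + k) * exp (-x ^ 2) = √π / 2 + k * √π := by
  simp only [add_mul]
  rw [integral_add integrable_sq_mul_exp_neg_sq (integrable_exp_neg_sq.const_mul k),
    integral_const_mul, integral_sq_mul_exp_neg_sq, integral_exp_neg_sq]

theorem tendsto_neg_div_sub_nhdsGT {c : ℝ} (hc : 0 < c) (p : ℝ) :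
    Tendsto (fun t => -c / (t - p)) (𝓝[>] p) atBot := by
  have h : Tendsto (fun t => t - p) (𝓝[>] p) (𝓝[>] 0) :=
    tendsto_nhdsWithin_iff.mpr
      ⟨tendsto_nhdsWithin_of_tendsto_nhds (by simpa using (continuous_sub_right p).tendsto p),
        eventually_nhdsWithin_of_forall fun t ht => mem_Ioi.mpr (sub_pos.mpr ht)⟩
  simpa only [div_eq_mul_inv, Pi.inv_apply] using
    tendsto_const_nhds.neg_mul_atTop (neg_neg_of_pos hc) h.inv_tendsto_nhdsGT_zero

theorem tendsto_neg_div_sub_nhdsLT {c : ℝ} (hc : 0 < c) (p : ℝ) :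
    Tendsto (fun t => -c / (t - p)) (𝓝[<] p) atTop := by
  have h : Tendsto (fun t => t - p) (𝓝[<] p) (𝓝[<] 0) :=
    tendsto_nhdsWithin_iff.mpr
      ⟨tendsto_nhdsWithin_of_tendsto_nhds (by simpa using (continuous_sub_right p).tendsto p),
        eventually_nhdsWithin_of_forall fun t ht => mem_Iio.mpr (sub_neg.mpr ht)⟩
  simpa only [div_eq_mul_inv, Pi.inv_apply] using
    tendsto_const_nhds.neg_mul_atBot (neg_neg_of_pos hc) h.inv_tendsto_nhdsLT_zero

noncomputable def glasser (s c t : ℝ) : ℝ := t - c / (t - s) - c / (t + s)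

noncomputable def glasserDeriv (s c t : ℝ) : ℝ := 1 + c / (t - s) ^ 2 + c / (t + s) ^ 2

section glasser

variable {s c : ℝ}

theorem glasser_neg (t : ℝ) : glasser s c (-t) = -glasser s c t := by
  simp only [glasser, show -t - s = -(t + s) by ring, show -t + s = -(t - s) by ring, div_neg]
  ring

theorem hasDerivAt_glasser {t : ℝ} (ht : t ≠ s) (ht' : t ≠ -s) :
    HasDerivAt (glasser s c) (glasserDeriv s c t) t := by
  have h₁ : t - s ≠ 0 := sub_ne_zero.mpr ht
  have h₂ : t + s ≠ 0 := by rwa [← sub_neg_eq_add, sub_ne_zero]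
  have := ((hasDerivAt_id t).sub ((hasDerivAt_const t c).div
    ((hasDerivAt_id t).sub_const s) h₁)).sub
    ((hasDerivAt_const t c).div ((hasDerivAt_id t).add_const s) h₂)
  refine this.congr_deriv ?_
  simp only [glasserDeriv, id]
  field_simp
  ring

theorem glasserDeriv_pos (hc : 0 ≤ c) (t : ℝ) : 0 < glasserDeriv s c t :=
  add_pos_of_pos_of_nonneg (add_pos_of_pos_of_nonneg one_pos (div_nonneg hc (sq_nonneg _)))
    (div_nonneg hc (sq_nonneg _))

theorem glasser_eq_div {t : ℝ} (ht : t ≠ s) (ht' : t ≠ -s) :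
    glasser s c t = t * (t ^ 2 - (s ^ 2 + 2 * c)) / (t ^ 2 - s ^ 2) := by
  have h₁ : t - s ≠ 0 := sub_ne_zero.mpr ht
  have h₂ : t + s ≠ 0 := by rwa [← sub_neg_eq_add, sub_ne_zero]
  rw [glasser, eq_div_iff (by rw [sq_sub_sq]; exact mul_ne_zero h₂ h₁)]
  field_simp
  ring

theorem glasser_cubic {t x : ℝ} (ht : t ≠ s) (ht' : t ≠ -s) (hx : glasser s c t = x) :
    t ^ 3 + -x * t ^ 2 + -(s ^ 2 + 2 * c) * t + s ^ 2 * x = 0 := by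
  have h₁ : t - s ≠ 0 := sub_ne_zero.mpr ht
  have h₂ : t + s ≠ 0 := by rwa [← sub_neg_eq_add, sub_ne_zero]
  rw [← hx, glasser]
  field_simp
  ring

theorem continuousOn_glasser {D : Set ℝ} (hsD : s ∉ D) (hsD' : -s ∉ D) :
    ContinuousOn (glasser s c) D := fun _ ht =>
  (hasDerivAt_glasser (ne_of_mem_of_not_mem ht hsD)
    (ne_of_mem_of_not_mem ht hsD')).continuousAt.continuousWithinAt

theorem strictMonoOn_glasser {D : Set ℝ} (hD : Convex ℝ D) (hsD : s ∉ D) (hsD' : -s ∉ D)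
    (hc : 0 ≤ c) : StrictMonoOn (glasser s c) D :=
  strictMonoOn_of_hasDerivWithinAt_pos hD (continuousOn_glasser hsD hsD')
    (fun _ ht => (hasDerivAt_glasser (ne_of_mem_of_not_mem (interior_subset ht) hsD)
      (ne_of_mem_of_not_mem (interior_subset ht) hsD')).hasDerivWithinAt)
    (fun t _ => glasserDeriv_pos hc t)

theorem sum_deriv_mul_sq_glasser_inverse {g₁ g₂ g₃ : ℝ → ℝ}
    (hd₁ : Differentiable ℝ g₁) (hd₂ : Differentiable ℝ g₂) (hd₃ : Differentiable ℝ g₃)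
    (hinv₁ : ∀ x, glasser s c (g₁ x) = x) (hinv₂ : ∀ x, glasser s c (g₂ x) = x)
    (hinv₃ : ∀ x, glasser s c (g₃ x) = x)
    (h₁ : ∀ x, g₁ x < -s) (h₂ : ∀ x, -s < g₂ x ∧ g₂ x < s) (h₃ : ∀ x, s < g₃ x) (x : ℝ) :
    deriv g₁ x * g₁ x ^ 2 + deriv g₂ x * g₂ x ^ 2 + deriv g₃ x * g₃ x ^ 2 = x ^ 2 + 2 * c := by
  have hcubes : (fun x => g₁ x ^ 3 + g₂ x ^ 3 + g₃ x ^ 3) = fun x => x ^ 3 + 6 * c * x := by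
    funext x
    have h₁₂ := (h₁ x).trans (h₂ x).1
    have h₂₃ := (h₂ x).2.trans (h₃ x)
    have := sum_cubes_of_cubic_roots h₁₂.ne (h₁₂.trans h₂₃).ne h₂₃.ne
      (glasser_cubic (h₁₂.trans (h₂ x).2).ne (h₁ x).ne (hinv₁ x))
      (glasser_cubic (h₂ x).2.ne (h₂ x).1.ne' (hinv₂ x))
      (glasser_cubic (h₃ x).ne' ((h₂ x).1.trans h₂₃).ne' (hinv₃ x))
    linear_combination this
  have hL : HasDerivAt (fun x => g₁ x ^ 3 + g₂ x ^ 3 + g₃ x ^ 3)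
      (3 * g₁ x ^ 2 * deriv g₁ x + 3 * g₂ x ^ 2 * deriv g₂ x + 3 * g₃ x ^ 2 * deriv g₃ x) x := by
    simpa using (((hd₁ x).hasDerivAt.fun_pow 3).fun_add ((hd₂ x).hasDerivAt.fun_pow 3)).fun_add
      ((hd₃ x).hasDerivAt.fun_pow 3)
  have hR : HasDerivAt (fun x => x ^ 3 + 6 * c * x) (3 * x ^ 2 + 6 * c) x := by
    simpa using (hasDerivAt_pow 3 x).fun_add ((hasDerivAt_id x).const_mul (6 * c))
  rw [hcubes] at hL
  linear_combination (hL.unique hR) / 3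

theorem exists_glasser_inverse {D : Set ℝ} (hD : IsOpen D) (hDc : Convex ℝ D) (hsD : s ∉ D)
    (hsD' : -s ∉ D) (hc : 0 ≤ c) (hsurj : SurjOn (glasser s c) D univ) :
    ∃ g : ℝ → ℝ, StrictMono g ∧ range g = D ∧ Differentiable ℝ g ∧
      ∀ x, glasser s c (g x) = x := by
  obtain ⟨g, hg, hrange, hinv, hderiv⟩ :=
    (strictMonoOn_glasser hDc hsD hsD' hc).exists_hasDerivAt_inverse hD hsurj
      (fun t ht => hasDerivAt_glasser (ne_of_mem_of_not_mem ht hsD) (ne_of_mem_of_not_mem ht hsD'))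
      (fun t _ => (glasserDeriv_pos hc t).ne')
  exact ⟨g, hg, hrange, fun x => (hderiv x).differentiableAt, hinv⟩

variable (hs : 0 < s) (hc : 0 < c)
include hs hc

theorem surjOn_glasser_Ioi : SurjOn (glasser s c) (Ioi s) univ := by
  refine (continuousOn_glasser (by simp) (by simp; linarith)).surjOn_of_tendsto
    nonempty_Ioi ?_ ?_
  · rw [tendsto_comp_coe_Ioi_atBot]
    have hrest : ContinuousAt (fun t => t - c / (t + s)) s := by
      fun_prop (disch := linarith)
    have := hrest.tendsto.mono_left nhdsWithin_le_nhds |>.add_atBot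
      (tendsto_neg_div_sub_nhdsGT hc s)
    refine this.congr fun t => ?_
    simp only [glasser]
    ring
  · rw [tendsto_comp_val_Ioi_atTop]
    have hpole (p : ℝ) : Tendsto (fun t => c / (t - p)) atTop (𝓝 0) :=
      tendsto_const_nhds.div_atTop (tendsto_atTop_add_const_right _ _ tendsto_id)
    have := tendsto_id.atTop_add ((hpole s).add (hpole (-s))).neg
    refine this.congr fun t => ?_
    simp only [glasser, id, sub_neg_eq_add]
    ring

theorem surjOn_glasser_Ioo : SurjOn (glasser s c) (Ioo (-s) s) univ := by
  have hss : -s < s := by linarith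
  refine (continuousOn_glasser (by simp) (by simp)).surjOn_of_tendsto
    (nonempty_Ioo.mpr hss) ?_ ?_
  · rw [tendsto_comp_coe_Ioo_atBot hss]
    have hrest : ContinuousAt (fun t => t - c / (t - s)) (-s) := by
      fun_prop (disch := linarith)
    have := hrest.tendsto.mono_left nhdsWithin_le_nhds |>.add_atBot
      (tendsto_neg_div_sub_nhdsGT hc (-s))
    refine this.congr fun t => ?_
    simp only [glasser, sub_neg_eq_add]
    ring
  · rw [tendsto_comp_coe_Ioo_atTop hss]
    have hrest : ContinuousAt (fun t => t - c / (t + s)) s := by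
      fun_prop (disch := linarith)
    have := hrest.tendsto.mono_left nhdsWithin_le_nhds |>.add_atTop
      (tendsto_neg_div_sub_nhdsLT hc s)
    refine this.congr fun t => ?_
    simp only [glasser]
    ring

theorem surjOn_glasser_Iio : SurjOn (glasser s c) (Iio (-s)) univ := by
  intro x _
  obtain ⟨t, ht, hx⟩ := surjOn_glasser_Ioi hs hc (mem_univ (-x))
  exact ⟨-t, mem_Iio.mpr (neg_lt_neg ht), by rw [glasser_neg, hx, neg_neg]⟩

theorem integral_glasser_branches :
    (∫ t in Iio (-s), t ^ 2 * exp (-glasser s c t ^ 2))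
      + (∫ t in Ioo (-s) s, t ^ 2 * exp (-glasser s c t ^ 2))
      + (∫ t in Ioi s, t ^ 2 * exp (-glasser s c t ^ 2)) = √π / 2 + 2 * c * √π := by
  obtain ⟨g₁, hg₁, hr₁, hd₁, hi₁⟩ := exists_glasser_inverse isOpen_Iio (convex_Iio _)
    (by simp; linarith) (by simp) hc.le (surjOn_glasser_Iio hs hc)
  obtain ⟨g₂, hg₂, hr₂, hd₂, hi₂⟩ := exists_glasser_inverse isOpen_Ioo (convex_Ioo _ _)
    (by simp) (by simp) hc.le (surjOn_glasser_Ioo hs hc)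
  obtain ⟨g₃, hg₃, hr₃, hd₃, hi₃⟩ := exists_glasser_inverse isOpen_Ioi (convex_Ioi _)
    (by simp) (by simp; linarith) hc.le (surjOn_glasser_Ioi hs hc)
  have hm : Measurable (glasser s c) := by unfold glasser; fun_prop
  have hmeas {g : ℝ → ℝ} (hd : Differentiable ℝ g) :
      AEStronglyMeasurable fun x => deriv g x * (g x ^ 2 * exp (-glasser s c (g x) ^ 2)) := by
    have := hd.continuous.measurable
    have := measurable_deriv g
    exact Measurable.aestronglyMeasurable (by fun_prop)
  have hnonneg {g : ℝ → ℝ} (hg : StrictMono g) (x : ℝ) :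
      0 ≤ deriv g x * (g x ^ 2 * exp (-glasser s c (g x) ^ 2)) :=
    mul_nonneg hg.monotone.deriv_nonneg (by positivity)
  rw [← hr₁, ← hr₂, ← hr₃, hg₁.integral_range hd₁, hg₂.integral_range hd₂,
    hg₃.integral_range hd₃, integral_add_add_of_nonneg (integrable_sq_add_mul_exp_neg_sq (2 * c))
      _ (hnonneg hg₁) (hnonneg hg₂) (hnonneg hg₃) (hmeas hd₁) (hmeas hd₂) (hmeas hd₃),
    integral_sq_add_mul_exp_neg_sq]
  intro x
  have hmem {g : ℝ → ℝ} {D : Set ℝ} (hr : range g = D) (y : ℝ) : g y ∈ D :=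
    hr ▸ mem_range_self y
  have := sum_deriv_mul_sq_glasser_inverse hd₁ hd₂ hd₃ hi₁ hi₂ hi₃
    (hmem hr₁) (hmem hr₂) (hmem hr₃) x
  simp only [hi₁, hi₂, hi₃]
  linear_combination exp (-x ^ 2) * this

end glasser

theorem example_integral_I1' (a b : ℝ) (hb : 0 < b) (hab : b < a) :
    (∫ t in Ioo (0:ℝ) (Real.sqrt b), t ^ 2 * Real.exp (-(t * (t ^ 2 - a) / (t ^ 2 - b)) ^ 2)) +
    (∫ t in Ioi (Real.sqrt b), t ^ 2 * Real.exp (-(t * (t ^ 2 - a) / (t ^ 2 - b)) ^ 2))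
      = Real.sqrt π / 2 * (a - b + 1/2) := by
  set s := √b
  set F : ℝ → ℝ := fun t => t ^ 2 * exp (-(t * (t ^ 2 - a) / (t ^ 2 - b)) ^ 2)
  have hs : 0 < s := sqrt_pos.mpr hb
  have hc : 0 < (a - b) / 2 := half_pos (sub_pos.mpr hab)
  have hF_even : F.Even := fun t => by simp [F, neg_div]
  have hF {D : Set ℝ} (hD : MeasurableSet D) (hsD : s ∉ D) (hsD' : -s ∉ D) :
      ∫ t in D, F t = ∫ t in D, t ^ 2 * exp (-glasser s ((a - b) / 2) t ^ 2) := by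
    refine setIntegral_congr_fun hD fun t ht => ?_
    rw [glasser_eq_div (ne_of_mem_of_not_mem ht hsD) (ne_of_mem_of_not_mem ht hsD'),
      sq_sqrt hb.le, show b + 2 * ((a - b) / 2) = a by ring]
  have key := integral_glasser_branches hs hc
  rw [← hF measurableSet_Iio (by simp; linarith) (by simp),
    ← hF measurableSet_Ioo (by simp) (by simp),
    ← hF measurableSet_Ioi (by simp) (by simp; linarith),
    hF_even.integral_Iio_neg_eq_integral_Ioi, hF_even.integral_Ioo_neg_eq_two_mul] at key
  linear_combination key / 2
end

section
/- The integral over ℝ of exp(-((x² - 1)/x)²) dx, interpreted as the sum of integrals over (-∞, 0) and (0, ∞), equals √π. -/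
/-!
On each half-line `{0 < ε x}` (`ε = ±1`) the map `x ↦ x - x⁻¹` is a diffeomorphism onto `ℝ`, with
inverse the root `ψ_ε(u) = (u + ε √(u² + 4)) / 2` of `ψ² = u ψ + 1`. Changing variables on both
half-lines turns `∫_{x<0} f (x - x⁻¹) + ∫_{x>0} f (x - x⁻¹)` into `∫ (ψ₋₁' + ψ₁') f`, and
`ψ₋₁ + ψ₁ = id` makes the weight equal to `1`. For `f u = exp (-u²)` this is the Gaussian integral.
-/

open MeasureTheory Set Real

noncomputable def subInvBranch (ε u : ℝ) : ℝ := (u + ε * √(u ^ 2 + 4)) / 2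

noncomputable def subInvBranchDeriv (ε u : ℝ) : ℝ := (1 + ε * (u / √(u ^ 2 + 4))) / 2

lemma abs_lt_sqrt_sq_add_four (u : ℝ) : |u| < √(u ^ 2 + 4) := by
  rw [← sqrt_sq_eq_abs]
  exact sqrt_lt_sqrt (sq_nonneg u) (by linarith)

lemma hasDerivAt_subInvBranch (ε u : ℝ) :
    HasDerivAt (subInvBranch ε) (subInvBranchDeriv ε u) u := by
  have hpos : 0 < u ^ 2 + 4 := by positivity
  have hsqrt : HasDerivAt (fun u : ℝ => √(u ^ 2 + 4)) (u / √(u ^ 2 + 4)) u := by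
    convert ((hasDerivAt_pow 2 u).add_const 4).sqrt hpos.ne' using 1
    field_simp
    ring
  exact ((hasDerivAt_id u).add (hsqrt.const_mul ε)).div_const 2

lemma subInvBranchDeriv_mem_Ioo {ε : ℝ} (hε : |ε| ≤ 1) (u : ℝ) :
    subInvBranchDeriv ε u ∈ Ioo 0 1 := by
  have hsqrt := (abs_nonneg u).trans_lt (abs_lt_sqrt_sq_add_four u)
  have hlt : |ε * (u / √(u ^ 2 + 4))| < 1 := by
    rw [abs_mul, abs_div, abs_of_pos hsqrt]
    calc |ε| * (|u| / √(u ^ 2 + 4)) ≤ |u| / √(u ^ 2 + 4) :=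
          mul_le_of_le_one_left (by positivity) hε
      _ < 1 := (div_lt_one hsqrt).2 (abs_lt_sqrt_sq_add_four u)
  obtain ⟨hlow, hhigh⟩ := abs_lt.1 hlt
  constructor <;> unfold subInvBranchDeriv <;> linarith

lemma strictMono_subInvBranch {ε : ℝ} (hε : |ε| ≤ 1) : StrictMono (subInvBranch ε) :=
  strictMono_of_hasDerivAt_pos (hasDerivAt_subInvBranch ε)
    fun u => (subInvBranchDeriv_mem_Ioo hε u).1

lemma subInvBranch_sq {ε : ℝ} (hε : ε ^ 2 = 1) (u : ℝ) :
    subInvBranch ε u ^ 2 = u * subInvBranch ε u + 1 := by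
  have hsqrt : √(u ^ 2 + 4) ^ 2 = u ^ 2 + 4 := sq_sqrt (by positivity)
  unfold subInvBranch
  linear_combination (ε ^ 2 * hsqrt + (u ^ 2 + 4) * hε) / 4

lemma subInvBranch_sub_inv {ε : ℝ} (hε : ε ^ 2 = 1) (u : ℝ) :
    subInvBranch ε u - (subInvBranch ε u)⁻¹ = u := by
  have hsq := subInvBranch_sq hε u
  have hne : subInvBranch ε u ≠ 0 := by
    intro h
    simp [h] at hsq
  field_simp
  linear_combination hsq

lemma range_subInvBranch {ε : ℝ} (hε : |ε| = 1) :
    range (subInvBranch ε) = {x | 0 < ε * x} := by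
  have hε2 : ε ^ 2 = 1 := by rw [← sq_abs, hε, one_pow]
  ext x
  constructor
  · rintro ⟨u, rfl⟩
    have hlt : |ε * u| < √(u ^ 2 + 4) := by
      rw [abs_mul, hε, one_mul]
      exact abs_lt_sqrt_sq_add_four u
    have hexpand : ε * subInvBranch ε u = (ε * u + ε ^ 2 * √(u ^ 2 + 4)) / 2 := by
      unfold subInvBranch; ring
    rw [mem_ofPred_eq, hexpand, hε2, one_mul]
    linarith [neg_abs_le (ε * u)]
  · intro hx
    have hx0 : x ≠ 0 := by
      rintro rfl
      simp at hx
    have hpos : 0 < ε * (x + x⁻¹) := by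
      have hεinv : ε⁻¹ = ε := inv_eq_of_mul_eq_one_right (by rw [← sq, hε2])
      have : ε * x⁻¹ = (ε * x)⁻¹ := by rw [mul_inv, hεinv]
      rw [mul_add, this]
      exact add_pos hx (inv_pos.2 hx)
    have hsqrt : √((x - x⁻¹) ^ 2 + 4) = ε * (x + x⁻¹) := by
      rw [sqrt_eq_iff_eq_sq (by positivity) hpos.le]
      field_simp
      linear_combination (-(x ^ 2 + 1) ^ 2) * hε2
    refine ⟨x - x⁻¹, ?_⟩
    rw [subInvBranch, hsqrt]
    linear_combination (x + x⁻¹) / 2 * hε2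

lemma subInvBranchDeriv_neg_one_add_one (u : ℝ) :
    subInvBranchDeriv (-1) u + subInvBranchDeriv 1 u = 1 := by
  unfold subInvBranchDeriv
  ring

section ChangeOfVariables

variable {E : Type*} [NormedAddCommGroup E] [NormedSpace ℝ E]

lemma setIntegral_comp_sub_inv {ε : ℝ} (hε : |ε| = 1) (f : ℝ → E) :
    ∫ x in {x | 0 < ε * x}, f (x - x⁻¹) = ∫ u, subInvBranchDeriv ε u • f u := by
  have hε2 : ε ^ 2 = 1 := by rw [← sq_abs, hε, one_pow]
  rw [← range_subInvBranch hε, ← image_univ,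
    integral_image_eq_integral_abs_deriv_smul MeasurableSet.univ
      (fun u _ => (hasDerivAt_subInvBranch ε u).hasDerivWithinAt)
      (strictMono_subInvBranch hε.le).injective.injOn,
    setIntegral_univ]
  congr 1 with u
  rw [abs_of_pos (subInvBranchDeriv_mem_Ioo hε.le u).1, subInvBranch_sub_inv hε2]

lemma MeasureTheory.Integrable.subInvBranchDeriv_smul {f : ℝ → E} (hf : Integrable f) {ε : ℝ}
    (hε : |ε| ≤ 1) :
    Integrable fun u => subInvBranchDeriv ε u • f u := by
  have hmeas : Measurable (subInvBranchDeriv ε) := by unfold subInvBranchDeriv; fun_prop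
  refine hf.bdd_smul 1 hmeas.aestronglyMeasurable (ae_of_all _ fun u => ?_)
  obtain ⟨hpos, hlt⟩ := subInvBranchDeriv_mem_Ioo hε u
  rw [norm_of_nonneg hpos.le]
  exact hlt.le

theorem integral_Iio_add_integral_Ioi_comp_sub_inv {f : ℝ → E} (hf : Integrable f) :
    (∫ x in Iio 0, f (x - x⁻¹)) + ∫ x in Ioi 0, f (x - x⁻¹) = ∫ u, f u := by
  have hneg : Iio (0 : ℝ) = {x | 0 < -1 * x} := by ext; simp
  have hpos : Ioi (0 : ℝ) = {x | 0 < 1 * x} := by ext; simp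
  rw [hneg, hpos, setIntegral_comp_sub_inv (by norm_num), setIntegral_comp_sub_inv (by norm_num),
    ← integral_add (hf.subInvBranchDeriv_smul (by norm_num))
      (hf.subInvBranchDeriv_smul (by norm_num))]
  congr 1 with u
  rw [← add_smul, subInvBranchDeriv_neg_one_add_one, one_smul]

end ChangeOfVariables

lemma sq_sub_one_div_eq_sub_inv {K : Type*} [DivisionRing K] (x : K) :
    (x ^ 2 - 1) / x = x - x⁻¹ := by
  rw [sub_div, sq, mul_self_div_self, one_div]

theorem iterate_identity_one :
    (∫ x in Iio (0:ℝ), Real.exp (-((x ^ 2 - 1) / x) ^ 2)) +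
    (∫ x in Ioi (0:ℝ), Real.exp (-((x ^ 2 - 1) / x) ^ 2))
      = Real.sqrt π := by
  simp_rw [sq_sub_one_div_eq_sub_inv]
  rw [integral_Iio_add_integral_Ioi_comp_sub_inv (f := fun u => exp (-u ^ 2))
    (by simpa using integrable_exp_neg_mul_sq one_pos)]
  simpa using integral_gaussian 1
end
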